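/- arXiv:2404.17907 — 3 statements merged into one kernel-verified Lean document; each statement's English description precedes it below -/
import Mathlib

section
/- Let H be a complex Hilbert space and let (T_1, T_2) be a doubly commuting pair of operators in B(H), each satisfying condition (∗). Let (z_1, z_2) ∈ ℂ². If the block operator α((T_1,T_2) − (z_1,z_2)) on H ⊕ H is not invertible, then there exists a sequence (y_m) of unit vectors in H such that ‖(T_1 − z_1)^* y_m‖ → 0 and ‖(T_2 − z_2)^* y_m‖ → 0 as m → ∞. -/
open ContinuousLinearMap Filter Topology
open scoped InnerProductSpace NNReal

variable {H : Type*} [NormedAddCommGroup H] [InnerProductSpace ℂ H] [CompleteSpace H]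

/-- Condition (∗): for every `z ∈ ℂ` and every sequence of unit vectors `xₙ`,
`‖(T - z)xₙ‖ → 0` implies `‖(T - z)^* xₙ‖ → 0`. -/
def CondStar (T : H →L[ℂ] H) : Prop :=
  ∀ (z : ℂ) (x : ℕ → H), (∀ n, ‖x n‖ = 1) →
    Tendsto (fun n => ‖(T - z • 1) (x n)‖) atTop (𝓝 0) →
    Tendsto (fun n => ‖adjoint (T - z • 1) (x n)‖) atTop (𝓝 0)

/-- Vasilescu's block operator `α((T₁,T₂) - (z₁,z₂))` on `H ⊕ H`, given in block form by
`[[T₁ - z₁, T₂ - z₂], [-(T₂ - z₂)^*, (T₁ - z₁)^*]]`. -/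
noncomputable def alphaOp (T₁ T₂ : H →L[ℂ] H) (z : ℂ × ℂ) : (H × H) →L[ℂ] (H × H) :=
  (((T₁ - z.1 • 1).comp (ContinuousLinearMap.fst ℂ H H) +
      (T₂ - z.2 • 1).comp (ContinuousLinearMap.snd ℂ H H)).prod
    ((-(adjoint (T₂ - z.2 • 1))).comp (ContinuousLinearMap.fst ℂ H H) +
      (adjoint (T₁ - z.1 • 1)).comp (ContinuousLinearMap.snd ℂ H H)))

namespace VasilescuAux

/-- Key analytic lemma: if `C†C + DD†` is not invertible then there is a sequence of unit
vectors killed by `C` and by `D†`. -/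
lemma key (C D : H →L[ℂ] H) (h : ¬ IsUnit (adjoint C * C + D * adjoint D)) :
    ∃ x : ℕ → H, (∀ n, ‖x n‖ = 1) ∧
      Tendsto (fun n => ‖C (x n)‖) atTop (𝓝 0) ∧
      Tendsto (fun n => ‖adjoint D (x n)‖) atTop (𝓝 0) := by
  set S := adjoint C * C + D * adjoint D with hS
  have hinner : ∀ v : H, ‖⟪S v, v⟫_ℂ‖ = ‖C v‖ ^ 2 + ‖adjoint D v‖ ^ 2 := by
    intro v
    have e1 : ⟪(adjoint C) (C v), v⟫_ℂ = ⟪C v, C v⟫_ℂ := adjoint_inner_left C v (C v)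
    have e2 : ⟪D ((adjoint D) v), v⟫_ℂ = ⟪(adjoint D) v, (adjoint D) v⟫_ℂ :=
      (adjoint_inner_right D ((adjoint D) v) v).symm
    have hv : ⟪S v, v⟫_ℂ = ((‖C v‖ ^ 2 + ‖adjoint D v‖ ^ 2 : ℝ) : ℂ) := by
      rw [hS]
      simp only [add_apply, ContinuousLinearMap.mul_apply, inner_add_left, e1, e2, inner_self_eq_norm_sq_to_K]
      norm_cast
    rw [hv, Complex.norm_real, Real.norm_eq_abs]
    exact abs_of_nonneg (by positivity)
  have hex : ∀ n : ℕ, ∃ v : H, ‖v‖ = 1 ∧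
      ‖C v‖ ^ 2 + ‖adjoint D v‖ ^ 2 < ((n : ℝ) + 1)⁻¹ := by
    intro n
    by_contra hcon
    push_neg at hcon
    apply h
    have hcpos : (0 : ℝ) < ((n : ℝ) + 1)⁻¹ := by positivity
    refine isUnit_of_forall_le_norm_inner_map S (c := ⟨((n : ℝ) + 1)⁻¹, hcpos.le⟩)
      (by exact_mod_cast hcpos) ?_
    intro x
    rw [hinner]
    rcases eq_or_ne x 0 with rfl | hx
    · simp
    · have hxn : (0 : ℝ) < ‖x‖ := norm_pos_iff.mpr hx
      have hu : ‖((‖x‖ : ℂ))⁻¹ • x‖ = 1 := by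
        rw [norm_smul, norm_inv, Complex.norm_real, Real.norm_eq_abs, abs_of_nonneg hxn.le,
          inv_mul_cancel₀ hxn.ne']
      have hle := hcon _ hu
      have hCs : ‖C (((‖x‖ : ℂ))⁻¹ • x)‖ ^ 2 = ‖x‖⁻¹ ^ 2 * ‖C x‖ ^ 2 := by
        rw [map_smul, norm_smul, norm_inv, Complex.norm_real, Real.norm_eq_abs, abs_of_nonneg hxn.le]
        ring
      have hDs : ‖adjoint D (((‖x‖ : ℂ))⁻¹ • x)‖ ^ 2 = ‖x‖⁻¹ ^ 2 * ‖adjoint D x‖ ^ 2 := by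
        rw [map_smul, norm_smul, norm_inv, Complex.norm_real, Real.norm_eq_abs, abs_of_nonneg hxn.le]
        ring
      rw [hCs, hDs, ← mul_add] at hle
      have h2 : ‖x‖ ^ 2 * (((n : ℝ) + 1)⁻¹) ≤
          ‖x‖ ^ 2 * (‖x‖⁻¹ ^ 2 * (‖C x‖ ^ 2 + ‖adjoint D x‖ ^ 2)) :=
        mul_le_mul_of_nonneg_left hle (by positivity)
      calc ‖x‖ ^ 2 * ((⟨((n : ℝ) + 1)⁻¹, hcpos.le⟩ : ℝ≥0) : ℝ)
          = ‖x‖ ^ 2 * (((n : ℝ) + 1)⁻¹) := rfl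
        _ ≤ ‖x‖ ^ 2 * (‖x‖⁻¹ ^ 2 * (‖C x‖ ^ 2 + ‖adjoint D x‖ ^ 2)) := h2
        _ = ‖C x‖ ^ 2 + ‖adjoint D x‖ ^ 2 := by
            field_simp
  choose x hx1 hx2 using hex
  have hb : Tendsto (fun n : ℕ => ((n : ℝ) + 1)⁻¹) atTop (𝓝 0) := by
    simpa [one_div] using tendsto_one_div_add_atTop_nhds_zero_nat (𝕜 := ℝ)
  have hsq1 : Tendsto (fun n => ‖C (x n)‖ ^ 2) atTop (𝓝 0) :=
    squeeze_zero (fun n => by positivity)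
      (fun n => ((le_add_of_nonneg_right (by positivity)).trans (hx2 n).le)) hb
  have hsq2 : Tendsto (fun n => ‖adjoint D (x n)‖ ^ 2) atTop (𝓝 0) :=
    squeeze_zero (fun n => by positivity)
      (fun n => ((le_add_of_nonneg_left (by positivity)).trans (hx2 n).le)) hb
  refine ⟨x, hx1, ?_, ?_⟩
  · have := (Real.continuous_sqrt.tendsto 0).comp hsq1
    simpa [Function.comp_def, Real.sqrt_sq (norm_nonneg _)] using this
  · have := (Real.continuous_sqrt.tendsto 0).comp hsq2
    simpa [Function.comp_def, Real.sqrt_sq (norm_nonneg _)] using this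

lemma isUnit_of_left_right {M : Type*} [Monoid M] {a l r : M}
    (hl : l * a = 1) (hr : a * r = 1) : IsUnit a := by
  have hlr : l = r := by rw [← mul_one l, ← hr, ← mul_assoc, hl, one_mul]
  exact ⟨⟨a, r, hr, by rw [← hlr, hl]⟩, rfl⟩

/-- A diagonal block operator with invertible diagonal entries is invertible. -/
lemma diag_isUnit {P Q : H →L[ℂ] H} (hP : IsUnit P) (hQ : IsUnit Q) :
    IsUnit ((P.comp (ContinuousLinearMap.fst ℂ H H)).prod
      (Q.comp (ContinuousLinearMap.snd ℂ H H))) := by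
  obtain ⟨p, rfl⟩ := hP
  obtain ⟨q, rfl⟩ := hQ
  have hpp : ∀ v, (↑p : H →L[ℂ] H) ((↑p⁻¹ : H →L[ℂ] H) v) = v := fun v => by
    have h' := DFunLike.congr_fun p.mul_inv v
    rwa [ContinuousLinearMap.mul_apply, ContinuousLinearMap.one_apply] at h'
  have hpp' : ∀ v, (↑p⁻¹ : H →L[ℂ] H) ((↑p : H →L[ℂ] H) v) = v := fun v => by
    have h' := DFunLike.congr_fun p.inv_mul v
    rwa [ContinuousLinearMap.mul_apply, ContinuousLinearMap.one_apply] at h'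
  have hqq : ∀ v, (↑q : H →L[ℂ] H) ((↑q⁻¹ : H →L[ℂ] H) v) = v := fun v => by
    have h' := DFunLike.congr_fun q.mul_inv v
    rwa [ContinuousLinearMap.mul_apply, ContinuousLinearMap.one_apply] at h'
  have hqq' : ∀ v, (↑q⁻¹ : H →L[ℂ] H) ((↑q : H →L[ℂ] H) v) = v := fun v => by
    have h' := DFunLike.congr_fun q.inv_mul v
    rwa [ContinuousLinearMap.mul_apply, ContinuousLinearMap.one_apply] at h'
  refine ⟨⟨_, (((↑p⁻¹ : H →L[ℂ] H)).comp (ContinuousLinearMap.fst ℂ H H)).prod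
      (((↑q⁻¹ : H →L[ℂ] H)).comp (ContinuousLinearMap.snd ℂ H H)), ?_, ?_⟩, rfl⟩
  · refine ContinuousLinearMap.ext fun v => Prod.ext ?_ ?_ <;>
      simp [mul_apply, prod_apply, coe_comp', coe_fst', coe_snd', Function.comp_apply,
        one_apply, hpp, hqq]
  · refine ContinuousLinearMap.ext fun v => Prod.ext ?_ ?_ <;>
      simp [mul_apply, prod_apply, coe_comp', coe_fst', coe_snd', Function.comp_apply,
        one_apply, hpp', hqq']

end VasilescuAux

set_option maxHeartbeats 4000000 in
theorem stmt4 (T₁ T₂ : H →L[ℂ] H)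
    (hdc : T₁ * T₂ = T₂ * T₁ ∧ T₁ * adjoint T₂ = adjoint T₂ * T₁)
    (hstar₁ : CondStar T₁) (hstar₂ : CondStar T₂)
    (z : ℂ × ℂ) (h : ¬ IsUnit (alphaOp T₁ T₂ z)) :
    ∃ y : ℕ → H, (∀ m, ‖y m‖ = 1) ∧
      Tendsto (fun m => ‖adjoint (T₁ - z.1 • 1) (y m)‖) atTop (𝓝 0) ∧
      Tendsto (fun m => ‖adjoint (T₂ - z.2 • 1) (y m)‖) atTop (𝓝 0) := by
  obtain ⟨hc1, hc2⟩ := hdc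
  set A : H →L[ℂ] H := T₁ - z.1 • 1 with hA
  set B : H →L[ℂ] H := T₂ - z.2 • 1 with hB
  -- commutation relations
  have hz : ∀ (w : ℂ) (X : H →L[ℂ] H), Commute (w • 1) X := fun w X => by
    show (w • 1) * X = X * (w • 1)
    simp [smul_mul_assoc, mul_smul_comm]
  have cT12 : Commute T₁ T₂ := hc1
  have cT1T2s : Commute T₁ (adjoint T₂) := hc2
  have cAB : Commute A B :=
    Commute.sub_left (cT12.sub_right (hz z.2 T₁).symm) (hz z.1 B)
  have hBstar : star B = adjoint T₂ - star z.2 • 1 := by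
    rw [hB, star_sub, star_smul, star_one, star_eq_adjoint]
  have cABs : Commute A (star B) := by
    rw [hBstar]
    exact Commute.sub_left
      (cT1T2s.sub_right (hz (star z.2) T₁).symm)
      (hz z.1 _)
  have cAsB : Commute (star A) B := by
    have := cABs.star_star
    rwa [star_star] at this
  have cAsBs : Commute (star A) (star B) := cAB.star_star
  -- pointwise versions, with `star` rewritten to `adjoint`
  have sA : star A = adjoint A := star_eq_adjoint A
  have sB : star B = adjoint B := star_eq_adjoint B
  have p1 : ∀ v, A (B v) = B (A v) := fun v => by
    simpa [mul_apply] using DFunLike.congr_fun cAB.eq v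
  have p2 : ∀ v, A ((adjoint B) v) = (adjoint B) (A v) := fun v => by
    have h' := cABs.eq; rw [sB] at h'
    simpa [mul_apply] using DFunLike.congr_fun h' v
  have p3 : ∀ v, (adjoint A) (B v) = B ((adjoint A) v) := fun v => by
    have h' := cAsB.eq; rw [sA] at h'
    simpa [mul_apply] using DFunLike.congr_fun h' v
  have p4 : ∀ v, (adjoint A) ((adjoint B) v) = (adjoint B) ((adjoint A) v) := fun v => by
    have h' := cAsBs.eq; rw [sA, sB] at h'
    simpa [mul_apply] using DFunLike.congr_fun h' v
  -- the block operators
  set α : (H × H) →L[ℂ] (H × H) := alphaOp T₁ T₂ z with hα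
  have hα' : α = ((A.comp (ContinuousLinearMap.fst ℂ H H) +
      B.comp (ContinuousLinearMap.snd ℂ H H)).prod
    ((-(adjoint B)).comp (ContinuousLinearMap.fst ℂ H H) +
      (adjoint A).comp (ContinuousLinearMap.snd ℂ H H))) := rfl
  set β : (H × H) →L[ℂ] (H × H) := (((adjoint A).comp (ContinuousLinearMap.fst ℂ H H) +
      (-B).comp (ContinuousLinearMap.snd ℂ H H)).prod
    ((adjoint B).comp (ContinuousLinearMap.fst ℂ H H) +
      A.comp (ContinuousLinearMap.snd ℂ H H))) with hβ
  set d₁ : (H × H) →L[ℂ] (H × H) :=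
    ((adjoint A * A + B * adjoint B).comp (ContinuousLinearMap.fst ℂ H H)).prod
      ((adjoint B * B + A * adjoint A).comp (ContinuousLinearMap.snd ℂ H H)) with hd₁
  set d₂ : (H × H) →L[ℂ] (H × H) :=
    ((A * adjoint A + B * adjoint B).comp (ContinuousLinearMap.fst ℂ H H)).prod
      ((adjoint A * A + adjoint B * B).comp (ContinuousLinearMap.snd ℂ H H)) with hd₂
  clear_value A B α β d₁ d₂
  have hβα : β * α = d₁ := by
    rw [hβ, hα', hd₁]
    refine ContinuousLinearMap.ext fun v => Prod.ext ?_ ?_ <;>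
      · simp only [ContinuousLinearMap.mul_apply, prod_apply, ContinuousLinearMap.add_apply, ContinuousLinearMap.neg_apply, coe_comp', coe_fst', coe_snd',
          Function.comp_apply, map_add, map_neg, p1, p2, p3, p4]
        abel
  have hαβ : α * β = d₂ := by
    rw [hβ, hα', hd₂]
    refine ContinuousLinearMap.ext fun v => Prod.ext ?_ ?_ <;>
      · simp only [ContinuousLinearMap.mul_apply, prod_apply, ContinuousLinearMap.add_apply, ContinuousLinearMap.neg_apply, coe_comp', coe_fst', coe_snd',
          Function.comp_apply, map_add, map_neg, p1, p2, p3, p4]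
        abel
  have hcases : ¬ IsUnit (adjoint A * A + B * adjoint B) ∨
      ¬ IsUnit (adjoint B * B + A * adjoint A) ∨
      ¬ IsUnit (A * adjoint A + B * adjoint B) ∨
      ¬ IsUnit (adjoint A * A + adjoint B * B) := by
    by_contra hcon
    push_neg at hcon
    obtain ⟨h1, h2, h3, h4⟩ := hcon
    apply h
    obtain ⟨u₁, hu₁⟩ := VasilescuAux.diag_isUnit h1 h2
    obtain ⟨u₂, hu₂⟩ := VasilescuAux.diag_isUnit h3 h4
    rw [← hd₁] at hu₁
    rw [← hd₂] at hu₂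
    have hr : α * ((β : (H × H) →L[ℂ] (H × H)) * ↑u₂⁻¹) = 1 := by
      rw [← mul_assoc, hαβ, ← hu₂, Units.mul_inv]
    have hl : ((↑u₁⁻¹ : (H × H) →L[ℂ] (H × H)) * β) * α = 1 := by
      rw [mul_assoc, hβα, ← hu₁, Units.inv_mul]
    exact VasilescuAux.isUnit_of_left_right hl hr
  rw [hA, hB]
  rcases hcases with hc | hc | hc | hc
  · obtain ⟨x, hx1, hxC, hxD⟩ := VasilescuAux.key A B hc
    rw [hA] at hxC
    rw [hB] at hxD
    exact ⟨x, hx1, hstar₁ z.1 x hx1 hxC, hxD⟩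
  · obtain ⟨x, hx1, hxB, hxA⟩ := VasilescuAux.key B A hc
    rw [hB] at hxB
    rw [hA] at hxA
    exact ⟨x, hx1, hxA, hstar₂ z.2 x hx1 hxB⟩
  · have hc' : ¬ IsUnit (adjoint (adjoint A) * adjoint A + B * adjoint B) := by
      rwa [adjoint_adjoint]
    obtain ⟨x, hx1, hxA, hxB⟩ := VasilescuAux.key (adjoint A) B hc'
    rw [hA] at hxA
    rw [hB] at hxB
    exact ⟨x, hx1, hxA, hxB⟩
  · have hc' : ¬ IsUnit (adjoint A * A + adjoint B * adjoint (adjoint B)) := by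
      rwa [adjoint_adjoint]
    obtain ⟨x, hx1, hxA, hxB'⟩ := VasilescuAux.key A (adjoint B) hc'
    rw [show adjoint (adjoint B) = B from adjoint_adjoint B, hB] at hxB'
    rw [hA] at hxA
    exact ⟨x, hx1, hstar₁ z.1 x hx1 hxA, hstar₂ z.2 x hx1 hxB'⟩
end

section
/- Let H be a complex Hilbert space and let (T_1, T_2) be a doubly commuting pair of operators in B(H), each satisfying condition (∗). Suppose (x_m^1 ⊕ x_m^2) is a sequence of unit vectors in H ⊕ H such that (T_1^*T_1 + T_2T_2^*) x_m^1 → 0 and (T_1T_1^* + T_2^*T_2) x_m^2 → 0 as m → ∞. Then there exists a sequence (y_m) of unit vectors in H such that T_1^* y_m → 0 and T_2^* y_m → 0 as m → ∞. -/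
open ContinuousLinearMap Filter Topology

variable {H : Type*} [NormedAddCommGroup H] [InnerProductSpace ℂ H] [CompleteSpace H]

lemma condstar_uniform (T : H →L[ℂ] H) (h : CondStar T) {ε : ℝ} (hε : 0 < ε) :
    ∃ δ > 0, ∀ x : H, ‖x‖ = 1 → ‖T x‖ ≤ δ → ‖adjoint T x‖ ≤ ε := by
  by_contra hc
  push_neg at hc
  have hc' : ∀ n : ℕ, ∃ x : H, ‖x‖ = 1 ∧ ‖T x‖ ≤ 1 / (n + 1) ∧ ε < ‖adjoint T x‖ := by
    intro n
    obtain ⟨x, h1, h2, h3⟩ := hc (1 / (n + 1)) (by positivity)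
    exact ⟨x, h1, h2, h3⟩
  choose x hx1 hx2 hx3 using hc'
  have hT : Tendsto (fun n => ‖(T - (0:ℂ) • 1) (x n)‖) atTop (𝓝 0) := by
    simp only [zero_smul, sub_zero]
    exact squeeze_zero (fun n => norm_nonneg _) hx2 tendsto_one_div_add_atTop_nhds_zero_nat
  have h0 := h 0 x hx1 hT
  simp only [zero_smul, sub_zero] at h0
  obtain ⟨n, hn⟩ := (h0.eventually (gt_mem_nhds hε)).exists
  exact absurd (hx3 n) (not_lt.2 hn.le)

lemma aux_sq (A B : H →L[ℂ] H) (x : H) :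
    ‖A x‖ ^ 2 + ‖adjoint B x‖ ^ 2 ≤ ‖x‖ * ‖(adjoint A * A + B * adjoint B) x‖ := by
  have h1 : (inner ℂ x ((adjoint A * A + B * adjoint B) x) : ℂ)
      = ((‖A x‖ ^ 2 + ‖adjoint B x‖ ^ 2 : ℝ) : ℂ) := by
    simp only [add_apply, mul_apply_eq_comp, inner_add_right]
    rw [adjoint_inner_right, ← adjoint_inner_left B]
    simp [inner_self_eq_norm_sq_to_K]
  have h2 : ‖(inner ℂ x ((adjoint A * A + B * adjoint B) x) : ℂ)‖
      ≤ ‖x‖ * ‖(adjoint A * A + B * adjoint B) x‖ := norm_inner_le_norm x _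
  rw [h1] at h2
  calc ‖A x‖ ^ 2 + ‖adjoint B x‖ ^ 2
      ≤ ‖((‖A x‖ ^ 2 + ‖adjoint B x‖ ^ 2 : ℝ) : ℂ)‖ := by
        rw [Complex.norm_real]
        exact le_abs_self _
    _ ≤ ‖x‖ * ‖(adjoint A * A + B * adjoint B) x‖ := h2

lemma aux_tendsto (A B : H →L[ℂ] H) (x : ℕ → H) (hb : ∀ m, ‖x m‖ ≤ 1)
    (h : Tendsto (fun m => (adjoint A * A + B * adjoint B) (x m)) atTop (𝓝 0)) :
    Tendsto (fun m => A (x m)) atTop (𝓝 0) ∧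
      Tendsto (fun m => adjoint B (x m)) atTop (𝓝 0) := by
  have key : ∀ m, ‖A (x m)‖ ^ 2 + ‖adjoint B (x m)‖ ^ 2
      ≤ ‖(adjoint A * A + B * adjoint B) (x m)‖ := by
    intro m
    calc ‖A (x m)‖ ^ 2 + ‖adjoint B (x m)‖ ^ 2
        ≤ ‖x m‖ * ‖(adjoint A * A + B * adjoint B) (x m)‖ := aux_sq A B (x m)
      _ ≤ 1 * ‖(adjoint A * A + B * adjoint B) (x m)‖ :=
          mul_le_mul_of_nonneg_right (hb m) (norm_nonneg _)
      _ = _ := one_mul _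
  have hn : Tendsto (fun m => ‖(adjoint A * A + B * adjoint B) (x m)‖) atTop (𝓝 0) := by
    simpa using h.norm
  have hs : Tendsto (fun m => Real.sqrt ‖(adjoint A * A + B * adjoint B) (x m)‖) atTop (𝓝 0) := by
    simpa using hn.sqrt
  constructor
  · rw [tendsto_zero_iff_norm_tendsto_zero]
    refine squeeze_zero (fun m => norm_nonneg _) (fun m => ?_) hs
    rw [← Real.sqrt_sq (norm_nonneg (A (x m)))]
    exact Real.sqrt_le_sqrt (by nlinarith [key m, sq_nonneg ‖adjoint B (x m)‖])
  · rw [tendsto_zero_iff_norm_tendsto_zero]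
    refine squeeze_zero (fun m => norm_nonneg _) (fun m => ?_) hs
    rw [← Real.sqrt_sq (norm_nonneg (adjoint B (x m)))]
    exact Real.sqrt_le_sqrt (by nlinarith [key m, sq_nonneg ‖A (x m)‖])

theorem stmt5 (T₁ T₂ : H →L[ℂ] H)
    (hdc : T₁ * T₂ = T₂ * T₁ ∧ T₁ * adjoint T₂ = adjoint T₂ * T₁)
    (hstar₁ : CondStar T₁) (hstar₂ : CondStar T₂)
    (x₁ x₂ : ℕ → H) (hx : ∀ m, ‖x₁ m‖ ^ 2 + ‖x₂ m‖ ^ 2 = 1)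
    (h₁ : Tendsto (fun m => (adjoint T₁ * T₁ + T₂ * adjoint T₂) (x₁ m)) atTop (𝓝 0))
    (h₂ : Tendsto (fun m => (T₁ * adjoint T₁ + adjoint T₂ * T₂) (x₂ m)) atTop (𝓝 0)) :
    ∃ y : ℕ → H, (∀ m, ‖y m‖ = 1) ∧
      Tendsto (fun m => adjoint T₁ (y m)) atTop (𝓝 0) ∧
      Tendsto (fun m => adjoint T₂ (y m)) atTop (𝓝 0) := by
  classical
  have hb1 : ∀ m, ‖x₁ m‖ ≤ 1 := fun m => by
    nlinarith [hx m, norm_nonneg (x₁ m), norm_nonneg (x₂ m), sq_nonneg ‖x₂ m‖]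
  have hb2 : ∀ m, ‖x₂ m‖ ≤ 1 := fun m => by
    nlinarith [hx m, norm_nonneg (x₁ m), norm_nonneg (x₂ m), sq_nonneg ‖x₁ m‖]
  obtain ⟨hA1, hB1⟩ := aux_tendsto T₁ T₂ x₁ hb1 h₁
  have h₂' : Tendsto (fun m =>
      (adjoint (adjoint T₁) * adjoint T₁ + adjoint T₂ * adjoint (adjoint T₂)) (x₂ m))
      atTop (𝓝 0) := by simpa [adjoint_adjoint] using h₂
  obtain ⟨hA2, hB2⟩ := aux_tendsto (adjoint T₁) (adjoint T₂) x₂ hb2 h₂'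
  simp only [adjoint_adjoint] at hB2
  -- hA1 : T₁ x₁ → 0, hB1 : T₂* x₁ → 0, hA2 : T₁* x₂ → 0, hB2 : T₂ x₂ → 0
  set y : ℕ → H := fun m => if (1:ℝ)/2 ≤ ‖x₁ m‖ then ‖x₁ m‖⁻¹ • x₁ m else ‖x₂ m‖⁻¹ • x₂ m
    with hy
  have hx₂big : ∀ m, ¬ (1:ℝ)/2 ≤ ‖x₁ m‖ → (1:ℝ)/2 ≤ ‖x₂ m‖ := by
    intro m hm
    push_neg at hm
    nlinarith [hx m, norm_nonneg (x₁ m), norm_nonneg (x₂ m)]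
  have hunit : ∀ m, ‖y m‖ = 1 := by
    intro m
    rw [hy]
    by_cases hm : (1:ℝ)/2 ≤ ‖x₁ m‖
    · simp only [hm, if_pos]
      rw [norm_smul, norm_inv, norm_norm, inv_mul_cancel₀ (by linarith)]
    · simp only [hm, if_neg, not_false_iff]
      have := hx₂big m hm
      rw [norm_smul, norm_inv, norm_norm, inv_mul_cancel₀ (by linarith)]
  -- general bound lemma for the scaled vectors
  have hscale : ∀ (S : H →L[ℂ] H) (v : H), (1:ℝ)/2 ≤ ‖v‖ →
      ‖S (‖v‖⁻¹ • v)‖ ≤ 2 * ‖S v‖ := by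
    intro S v hv
    rw [map_smul_of_tower, norm_smul, norm_inv, norm_norm]
    have h1 : ‖v‖⁻¹ ≤ 2 := by
      rw [inv_le_comm₀ (by linarith) (by norm_num)]
      linarith
    exact mul_le_mul_of_nonneg_right h1 (norm_nonneg _)
  refine ⟨y, hunit, ?_, ?_⟩
  · -- adjoint T₁ (y m) → 0
    rw [NormedAddCommGroup.tendsto_nhds_zero]
    intro ε hε
    obtain ⟨δ, hδ, hδ'⟩ := condstar_uniform T₁ hstar₁ (half_pos hε)
    have E1 : ∀ᶠ m in atTop, ‖T₁ (x₁ m)‖ < δ / 2 := by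
      have := (tendsto_zero_iff_norm_tendsto_zero.mp hA1)
      exact this.eventually (gt_mem_nhds (by positivity))
    have E2 : ∀ᶠ m in atTop, ‖adjoint T₁ (x₂ m)‖ < ε / 4 := by
      have := (tendsto_zero_iff_norm_tendsto_zero.mp hA2)
      exact this.eventually (gt_mem_nhds (by positivity))
    filter_upwards [E1, E2] with m hm1 hm2
    rw [hy]
    by_cases hm : (1:ℝ)/2 ≤ ‖x₁ m‖
    · simp only [hm, if_pos]
      have hTy : ‖T₁ (‖x₁ m‖⁻¹ • x₁ m)‖ ≤ δ := by
        calc ‖T₁ (‖x₁ m‖⁻¹ • x₁ m)‖ ≤ 2 * ‖T₁ (x₁ m)‖ := hscale T₁ (x₁ m) hm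
          _ ≤ δ := by linarith
      have hu : ‖(‖x₁ m‖⁻¹ • x₁ m : H)‖ = 1 := by
        rw [norm_smul, norm_inv, norm_norm, inv_mul_cancel₀ (by linarith)]
      have := hδ' _ hu hTy
      linarith
    · simp only [hm, if_neg, not_false_iff]
      have hv := hx₂big m hm
      calc ‖adjoint T₁ (‖x₂ m‖⁻¹ • x₂ m)‖ ≤ 2 * ‖adjoint T₁ (x₂ m)‖ :=
            hscale (adjoint T₁) (x₂ m) hv
        _ < ε := by linarith
  · -- adjoint T₂ (y m) → 0
    rw [NormedAddCommGroup.tendsto_nhds_zero]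
    intro ε hε
    obtain ⟨δ, hδ, hδ'⟩ := condstar_uniform T₂ hstar₂ (half_pos hε)
    have E1 : ∀ᶠ m in atTop, ‖T₂ (x₂ m)‖ < δ / 2 := by
      have := (tendsto_zero_iff_norm_tendsto_zero.mp hB2)
      exact this.eventually (gt_mem_nhds (by positivity))
    have E2 : ∀ᶠ m in atTop, ‖adjoint T₂ (x₁ m)‖ < ε / 4 := by
      have := (tendsto_zero_iff_norm_tendsto_zero.mp hB1)
      exact this.eventually (gt_mem_nhds (by positivity))
    filter_upwards [E1, E2] with m hm1 hm2
    rw [hy]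
    by_cases hm : (1:ℝ)/2 ≤ ‖x₁ m‖
    · simp only [hm, if_pos]
      calc ‖adjoint T₂ (‖x₁ m‖⁻¹ • x₁ m)‖ ≤ 2 * ‖adjoint T₂ (x₁ m)‖ :=
            hscale (adjoint T₂) (x₁ m) hm
        _ < ε := by linarith
    · simp only [hm, if_neg, not_false_iff]
      have hv := hx₂big m hm
      have hTy : ‖T₂ (‖x₂ m‖⁻¹ • x₂ m)‖ ≤ δ := by
        calc ‖T₂ (‖x₂ m‖⁻¹ • x₂ m)‖ ≤ 2 * ‖T₂ (x₂ m)‖ := hscale T₂ (x₂ m) hv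
          _ ≤ δ := by linarith
      have hu : ‖(‖x₂ m‖⁻¹ • x₂ m : H)‖ = 1 := by
        rw [norm_smul, norm_inv, norm_norm, inv_mul_cancel₀ (by linarith)]
      have := hδ' _ hu hTy
      linarith
end

section
/- Let H be a complex Hilbert space. There exist a complex Hilbert space K and a unital, isometric star-algebra homomorphism Φ : B(H) → B(K) such that for every n ∈ ℕ, every family of operators T_1, ..., T_n ∈ B(H), and every (z_1, ..., z_n) ∈ ℂⁿ, the following are equivalent: (i) there exists a sequence (x_k) of unit vectors in H with ‖(T_j − z_j)x_k‖ → 0 as k → ∞ for every j = 1, ..., n; (ii) there exists a nonzero vector y ∈ K with (Φ(T_j) − z_j)y = 0 for every j = 1, ..., n. -/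
open ContinuousLinearMap Filter Topology

universe u

open scoped ENNReal
set_option linter.unusedSectionVars false
set_option linter.unusedVariables false
set_option maxHeartbeats 1000000

namespace Berb

noncomputable def U : Ultrafilter ℕ := (Ultrafilter.exists_le (atTop : Filter ℕ)).choose

lemma U_le : (U : Filter ℕ) ≤ atTop := (Ultrafilter.exists_le (atTop : Filter ℕ)).choose_spec

variable (H : Type u) [NormedAddCommGroup H] [InnerProductSpace ℂ H] [CompleteSpace H]

instance : Fact ((1:ℝ≥0∞) ≤ ∞) := ⟨le_top⟩

abbrev Linf : Type u := ↥(lp (fun _ : ℕ => H) ∞)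

variable {H}

/-- the ultrafilter limit of the norms -/
noncomputable def L (x : Linf H) : ℝ :=
  (IsCompact.ultrafilter_le_nhds (isCompact_Icc (a := (0:ℝ)) (b := ‖x‖))
    (U.map fun k => ‖x k‖)
    (by
      rw [Filter.le_principal_iff, Ultrafilter.mem_coe, Ultrafilter.mem_map]
      filter_upwards with k
      exact Set.mem_Icc.2 ⟨norm_nonneg _, lp.norm_apply_le_norm (by simp) x k⟩)).choose

lemma tendsto_L (x : Linf H) : Tendsto (fun k => ‖x k‖) U (𝓝 (L x)) := by
  have h := (IsCompact.ultrafilter_le_nhds (isCompact_Icc (a := (0:ℝ)) (b := ‖x‖))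
    (U.map fun k => ‖x k‖)
    (by
      rw [Filter.le_principal_iff, Ultrafilter.mem_coe, Ultrafilter.mem_map]
      filter_upwards with k
      exact Set.mem_Icc.2 ⟨norm_nonneg _, lp.norm_apply_le_norm (by simp) x k⟩)).choose_spec
  exact h.2

lemma L_eq {x : Linf H} {a : ℝ} (h : Tendsto (fun k => ‖x k‖) U (𝓝 a)) : L x = a :=
  tendsto_nhds_unique (tendsto_L x) h

lemma L_nonneg (x : Linf H) : 0 ≤ L x :=
  ge_of_tendsto (tendsto_L x) (Eventually.of_forall fun k => norm_nonneg _)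

lemma L_le_norm (x : Linf H) : L x ≤ ‖x‖ :=
  le_of_tendsto (tendsto_L x) (Eventually.of_forall fun k => lp.norm_apply_le_norm (by simp) x k)

lemma L_add_le (x y : Linf H) : L (x + y) ≤ L x + L y := by
  refine le_of_tendsto_of_tendsto' (tendsto_L (x + y)) ((tendsto_L x).add (tendsto_L y)) ?_
  intro k
  simp only [lp.coeFn_add, Pi.add_apply]
  exact norm_add_le _ _


lemma L_le_of_le {x : Linf H} {g : ℕ → ℝ} {a : ℝ} (hg : Tendsto g U (𝓝 a))
    (h : ∀ k, ‖x k‖ ≤ g k) : L x ≤ a :=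
  le_of_tendsto_of_tendsto' (tendsto_L x) hg h

lemma abs_L_sub_le (x y : Linf H) : |L x - L y| ≤ ‖x - y‖ := by
  have h : Tendsto (fun k => ‖x k‖ - ‖y k‖) U (𝓝 (L x - L y)) :=
    (tendsto_L x).sub (tendsto_L y)
  have h2 : Tendsto (fun k => |‖x k‖ - ‖y k‖|) U (𝓝 |L x - L y|) := h.abs
  refine le_of_tendsto h2 (Eventually.of_forall fun k => ?_)
  calc |‖x k‖ - ‖y k‖| ≤ ‖x k - y k‖ := abs_norm_sub_norm_le _ _
    _ = ‖(x - y) k‖ := by simp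
    _ ≤ ‖x - y‖ := lp.norm_apply_le_norm (by simp) _ k

lemma lipschitz_L : LipschitzWith 1 (L (H := H)) := by
  refine LipschitzWith.of_dist_le_mul fun x y => ?_
  rw [dist_eq_norm, dist_eq_norm, Real.norm_eq_abs]
  simpa using abs_L_sub_le x y

variable (H) in
/-- The null space of the ultrafilter-limit seminorm. -/
noncomputable def N : Submodule ℂ (Linf H) where
  carrier := {x | L x = 0}
  zero_mem' := by
    refine L_eq ?_
    have : (fun k => ‖(0 : Linf H) k‖) = fun k => 0 := by
      funext k; simp
    rw [this]; exact tendsto_const_nhds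
  add_mem' := by
    intro a b ha hb
    have h1 := L_add_le a b
    have h2 := L_nonneg (a + b)
    simp only [Set.mem_setOf_eq] at *
    linarith
  smul_mem' := by
    intro c x hx
    simp only [Set.mem_setOf_eq] at *
    refine L_eq ?_
    have : Tendsto (fun k => ‖c‖ * ‖x k‖) U (𝓝 (‖c‖ * L x)) :=
      (tendsto_L x).const_mul _
    rw [hx, mul_zero] at this
    refine this.congr fun k => ?_
    have : (c • x) k = c • (x k) := by
      rw [lp.coeFn_smul]; rfl
    rw [this, norm_smul]

lemma mem_N_iff {x : Linf H} : x ∈ N H ↔ L x = 0 := Iff.rfl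

lemma mem_N_iff' {x : Linf H} : x ∈ N H ↔ Tendsto (fun k => ‖x k‖) U (𝓝 0) := by
  rw [mem_N_iff]
  constructor
  · intro h; rw [← h]; exact tendsto_L x
  · exact fun h => L_eq h

instance : IsClosed ((N H : Set (Linf H))) := by
  have : (N H : Set (Linf H)) = L ⁻¹' {0} := rfl
  rw [this]
  exact IsClosed.preimage lipschitz_L.continuous isClosed_singleton

variable (H) in
/-- The Berberian ultrapower space. -/
abbrev K : Type u := (Linf H) ⧸ (N H)

/-- canonical projection -/
@[reducible] noncomputable def mkK (x : Linf H) : K H := Submodule.Quotient.mk x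

lemma mkK_surjective : Function.Surjective (mkK (H := H)) :=
  Submodule.Quotient.mk_surjective _

lemma norm_mkK (x : Linf H) : ‖mkK x‖ = L x := by
  refine le_antisymm ?_ ?_
  · refine le_of_forall_pos_le_add fun ε hε => ?_
    set A : Set ℕ := {k | ‖x k‖ < L x + ε} with hA
    have hAU : A ∈ U := (tendsto_L x).eventually
      (Filter.Tendsto.eventually_lt_const (lt_add_of_pos_right _ hε) tendsto_id)
    have hmem : Memℓp (fun k => if k ∈ A then (0 : H) else x k) ∞ := by
      apply memℓp_infty
      refine ⟨‖x‖, ?_⟩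
      rintro r ⟨k, rfl⟩
      by_cases h : k ∈ A <;> simp [h, lp.norm_apply_le_norm (by simp : (∞:ℝ≥0∞) ≠ 0) x k,
        norm_nonneg, le_trans (norm_nonneg (x k)) (lp.norm_apply_le_norm (by simp) x k)]
    set m : Linf H := ⟨fun k => if k ∈ A then (0 : H) else x k, hmem⟩ with hm
    have hmN : m ∈ N H := by
      rw [mem_N_iff']
      refine Tendsto.congr' ?_ tendsto_const_nhds
      filter_upwards [hAU] with k hk
      simp [hm, hk]
    have hxm : ‖x - m‖ ≤ L x + ε := by
      refine lp.norm_le_of_forall_le (by linarith [L_nonneg x]) fun k => ?_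
      have : (x - m) k = x k - m k := by simp
      rw [this]
      by_cases h : k ∈ A
      · simpa [hm, h] using le_of_lt h
      · simp only [hm]; simp [h]; linarith [L_nonneg x]
    calc ‖mkK x‖ = ‖mkK (x - m)‖ := by
          unfold mkK
          congr 1
          rw [Submodule.Quotient.eq]
          simpa using hmN
      _ ≤ ‖x - m‖ := by
          exact Submodule.Quotient.norm_mk_le (S := N H) (x - m)
      _ ≤ L x + ε := hxm
  · refine le_of_forall_pos_le_add fun ε hε => ?_
    obtain ⟨mm, hmm, hmm'⟩ := Submodule.Quotient.norm_mk_lt (S := N H) (mkK x) hε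
    have hd : mm - x ∈ N H := by
      rw [← Submodule.Quotient.eq]
      exact hmm
    have : L x ≤ L mm := by
      have h1 := L_add_le mm (x - mm)
      have h2 : L (x - mm) = 0 := by
        have : x - mm = -(mm - x) := by abel
        rw [this]
        have := (N H).neg_mem hd
        exact mem_N_iff.1 this
      have h3 : mm + (x - mm) = x := by abel
      rw [h3, h2, add_zero] at h1
      exact h1
    calc L x ≤ L mm := this
      _ ≤ ‖mm‖ := L_le_norm mm
      _ ≤ ‖mkK x‖ + ε := le_of_lt hmm'


lemma tendsto_norm_mk (x : Linf H) : Tendsto (fun k => ‖x k‖) U (𝓝 ‖mkK x‖) := by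
  rw [norm_mkK]; exact tendsto_L x

noncomputable instance : InnerProductSpace ℂ (K H) := by
  refine InnerProductSpace.ofNorm (𝕜 := ℂ) (E := K H) fun a b => ?_
  obtain ⟨x, rfl⟩ := mkK_surjective a
  obtain ⟨y, rfl⟩ := mkK_surjective b
  have h1 : mkK x + mkK y = mkK (x + y) := rfl
  have h2 : mkK x - mkK y = mkK (x - y) := rfl
  rw [h1, h2]
  refine tendsto_nhds_unique (l := (U : Filter ℕ))
    (f := fun k => ‖(x+y) k‖ * ‖(x+y) k‖ + ‖(x-y) k‖ * ‖(x-y) k‖) ?_ ?_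
  · exact ((tendsto_norm_mk (x+y)).mul (tendsto_norm_mk (x+y))).add
      ((tendsto_norm_mk (x-y)).mul (tendsto_norm_mk (x-y)))
  · have : Tendsto (fun k => 2 * (‖x k‖ * ‖x k‖ + ‖y k‖ * ‖y k‖)) U
        (𝓝 (2 * (‖mkK x‖ * ‖mkK x‖ + ‖mkK y‖ * ‖mkK y‖))) :=
      (((tendsto_norm_mk x).mul (tendsto_norm_mk x)).add
        ((tendsto_norm_mk y).mul (tendsto_norm_mk y))).const_mul 2
    refine this.congr fun k => ?_
    have hxk : (x + y) k = x k + y k := by simp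
    have hyk : (x - y) k = x k - y k := by simp
    rw [hxk, hyk]
    simpa only [sq] using (parallelogram_law_with_norm ℂ (x k) (y k)).symm

lemma tendsto_inner_mk (x y : Linf H) :
    Tendsto (fun k => (inner ℂ (x k) (y k) : ℂ)) U (𝓝 (inner ℂ (mkK x) (mkK y))) := by
  have hI : (RCLike.I : ℂ) = Complex.I := rfl
  have key : ∀ (a b : Linf H),
      Tendsto (fun k => ((‖a k + b k‖ : ℂ)^2)) U (𝓝 ((‖mkK a + mkK b‖ : ℂ)^2)) := by
    intro a b
    have h1 : mkK a + mkK b = mkK (a + b) := rfl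
    rw [h1]
    have := (Complex.continuous_ofReal.tendsto _).comp (tendsto_norm_mk (a + b))
    have := this.pow 2
    refine this.congr fun k => ?_
    simp [Function.comp]
  -- express both inners via polarization
  have hpolK := inner_eq_sum_norm_sq_div_four (𝕜 := ℂ) (mkK x) (mkK y)
  have hpolH : ∀ k, (inner ℂ (x k) (y k) : ℂ) =
      ((‖x k + y k‖ : ℂ) ^ 2 - (‖x k - y k‖ : ℂ) ^ 2 +
        ((‖x k - Complex.I • y k‖ : ℂ) ^ 2 - (‖x k + Complex.I • y k‖ : ℂ) ^ 2)
          * Complex.I) / 4 := by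
    intro k
    simpa [hI] using inner_eq_sum_norm_sq_div_four (𝕜 := ℂ) (x k) (y k)
  rw [hpolK, hI]
  have c1 := key x y
  have c2 : Tendsto (fun k => ((‖x k - y k‖ : ℂ)^2)) U (𝓝 ((‖mkK x - mkK y‖ : ℂ)^2)) := by
    have h1 : mkK x - mkK y = mkK (x - y) := rfl
    rw [h1]
    have := ((Complex.continuous_ofReal.tendsto _).comp (tendsto_norm_mk (x - y))).pow 2
    refine this.congr fun k => ?_
    simp [Function.comp]
  have hsm : mkK x - Complex.I • mkK y = mkK (x - Complex.I • y) := rfl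
  have hsm2 : mkK x + Complex.I • mkK y = mkK (x + Complex.I • y) := rfl
  have c3 : Tendsto (fun k => ((‖x k - Complex.I • y k‖ : ℂ)^2)) U
      (𝓝 ((‖mkK x - Complex.I • mkK y‖ : ℂ)^2)) := by
    rw [hsm]
    have := ((Complex.continuous_ofReal.tendsto _).comp
      (tendsto_norm_mk (x - Complex.I • y))).pow 2
    refine this.congr fun k => ?_
    have : (x - Complex.I • y) k = x k - Complex.I • y k := by
      simp [lp.coeFn_sub, lp.coeFn_smul]
      rfl
    simp [Function.comp, this]
  have c4 : Tendsto (fun k => ((‖x k + Complex.I • y k‖ : ℂ)^2)) U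
      (𝓝 ((‖mkK x + Complex.I • mkK y‖ : ℂ)^2)) := by
    rw [hsm2]
    have := ((Complex.continuous_ofReal.tendsto _).comp
      (tendsto_norm_mk (x + Complex.I • y))).pow 2
    refine this.congr fun k => ?_
    have : (x + Complex.I • y) k = x k + Complex.I • y k := by
      simp [lp.coeFn_add, lp.coeFn_smul]
      rfl
    simp [Function.comp, this]
  have main : Tendsto (fun k => (((‖x k + y k‖:ℂ)^2 - (‖x k - y k‖:ℂ)^2 +
      ((‖x k - Complex.I • y k‖:ℂ)^2 - (‖x k + Complex.I • y k‖:ℂ)^2) * Complex.I) / 4)) U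
      (𝓝 (((‖mkK x + mkK y‖:ℂ)^2 - (‖mkK x - mkK y‖:ℂ)^2 +
      ((‖mkK x - Complex.I • mkK y‖:ℂ)^2 - (‖mkK x + Complex.I • mkK y‖:ℂ)^2) * Complex.I) / 4)) :=
    (((c1.sub c2).add ((c3.sub c4).mul_const Complex.I)).div_const 4)
  refine main.congr fun k => ?_
  exact (hpolH k).symm


lemma memℓp_comp (T : H →L[ℂ] H) (f : Linf H) : Memℓp (fun k => T (f k)) ∞ := by
  apply memℓp_infty
  refine ⟨‖T‖ * ‖f‖, ?_⟩
  rintro r ⟨k, rfl⟩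
  calc ‖T (f k)‖ ≤ ‖T‖ * ‖f k‖ := T.le_opNorm _
    _ ≤ ‖T‖ * ‖f‖ := by
        have := lp.norm_apply_le_norm (by simp : (∞:ℝ≥0∞) ≠ 0) f k
        exact mul_le_mul_of_nonneg_left this (norm_nonneg T)

/-- componentwise action of an operator on the bounded-sequence space -/
noncomputable def compT (T : H →L[ℂ] H) : Linf H →ₗ[ℂ] Linf H where
  toFun f := ⟨fun k => T (f k), memℓp_comp T f⟩
  map_add' f g := by
    ext k
    simp [lp.coeFn_add]
    rfl
  map_smul' c f := by
    ext k
    have : (c • f) k = c • f k := by rw [lp.coeFn_smul]; rfl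
    simp [this, lp.coeFn_smul]

@[simp] lemma compT_apply (T : H →L[ℂ] H) (f : Linf H) (k : ℕ) :
    (compT T f) k = T (f k) := rfl

lemma compT_mem_N (T : H →L[ℂ] H) {f : Linf H} (hf : f ∈ N H) : compT T f ∈ N H := by
  rw [mem_N_iff'] at hf ⊢
  have hb : Tendsto (fun k => ‖T‖ * ‖f k‖) U (𝓝 (‖T‖ * 0)) := hf.const_mul _
  rw [mul_zero] at hb
  refine squeeze_zero_norm' ?_ hb
  filter_upwards with k
  simpa using T.le_opNorm (f k)

/-- the induced map on the quotient -/
noncomputable def qT (T : H →L[ℂ] H) : K H →ₗ[ℂ] K H :=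
  Submodule.mapQ (N H) (N H) (compT T) fun f hf => compT_mem_N T hf

lemma qT_mk (T : H →L[ℂ] H) (f : Linf H) : qT T (mkK f) = mkK (compT T f) := rfl

lemma qT_bound (T : H →L[ℂ] H) (a : K H) : ‖qT T a‖ ≤ ‖T‖ * ‖a‖ := by
  obtain ⟨f, rfl⟩ := mkK_surjective a
  rw [qT_mk, norm_mkK, norm_mkK]
  refine L_le_of_le ((tendsto_L f).const_mul ‖T‖) fun k => ?_
  simpa using T.le_opNorm (f k)

/-- the induced continuous map on the quotient -/
noncomputable def cT (T : H →L[ℂ] H) : K H →L[ℂ] K H :=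
  LinearMap.mkContinuous (qT T) ‖T‖ (qT_bound T)

@[simp] lemma cT_mk (T : H →L[ℂ] H) (f : Linf H) : cT T (mkK f) = mkK (compT T f) := rfl

/-- adjoints pass to the quotient -/
lemma cT_adjoint (T : H →L[ℂ] H) :
    cT (ContinuousLinearMap.adjoint T) = ContinuousLinearMap.adjoint (cT T) := by
  rw [eq_adjoint_iff]
  intro u v
  obtain ⟨f, rfl⟩ := mkK_surjective u
  obtain ⟨g, rfl⟩ := mkK_surjective v
  rw [cT_mk, cT_mk]
  refine tendsto_nhds_unique (l := (U : Filter ℕ))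
    (f := fun k => (inner ℂ ((ContinuousLinearMap.adjoint T) (f k)) (g k) : ℂ)) ?_ ?_
  · exact tendsto_inner_mk (compT (ContinuousLinearMap.adjoint T) f) g
  · have h := tendsto_inner_mk f (compT T g)
    refine h.congr fun k => ?_
    rw [compT_apply]
    exact (ContinuousLinearMap.adjoint_inner_left T (g k) (f k)).symm

variable (H) in
/-- The Berberian extension homomorphism. -/
noncomputable def Phi : (H →L[ℂ] H) →⋆ₐ[ℂ] (K H →L[ℂ] K H) where
  toFun := cT
  map_one' := by
    ext a
    obtain ⟨f, rfl⟩ := mkK_surjective a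
    rw [cT_mk]
    rfl
  map_mul' T S := by
    ext a
    obtain ⟨f, rfl⟩ := mkK_surjective a
    show cT (T * S) (mkK f) = cT T (cT S (mkK f))
    rw [cT_mk, cT_mk, cT_mk]
    rfl
  map_zero' := by
    ext a
    obtain ⟨f, rfl⟩ := mkK_surjective a
    rw [cT_mk]
    show mkK (compT 0 f) = 0
    have h0 : compT (0 : H →L[ℂ] H) f ∈ N H := by
      rw [mem_N_iff']
      have : (fun k => ‖(compT (0 : H →L[ℂ] H) f) k‖) = fun _ => 0 := by
        funext k; simp
      rw [this]
      exact tendsto_const_nhds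
    exact (Submodule.Quotient.mk_eq_zero _).2 h0
  map_add' T S := by
    ext a
    obtain ⟨f, rfl⟩ := mkK_surjective a
    show cT (T + S) (mkK f) = cT T (mkK f) + cT S (mkK f)
    rw [cT_mk, cT_mk, cT_mk]
    show mkK (compT (T + S) f) = mkK (compT T f + compT S f)
    congr 1
  commutes' c := by
    ext a
    obtain ⟨f, rfl⟩ := mkK_surjective a
    show cT (algebraMap ℂ (H →L[ℂ] H) c) (mkK f) = (algebraMap ℂ (K H →L[ℂ] K H) c) (mkK f)
    rw [cT_mk]
    have h1 : (algebraMap ℂ (K H →L[ℂ] K H) c) (mkK f) = c • (mkK f) := by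
      rw [Algebra.algebraMap_eq_smul_one]
      rfl
    rw [h1]
    have h2 : c • (mkK f) = mkK (c • f) := rfl
    rw [h2]
    congr 1
  map_star' T := by
    have h1 : star T = ContinuousLinearMap.adjoint T := star_eq_adjoint T
    have h2 : star (cT T) = ContinuousLinearMap.adjoint (cT T) := star_eq_adjoint (cT T)
    show cT (star T) = star (cT T)
    rw [h1, h2, cT_adjoint]

lemma Phi_apply (T : H →L[ℂ] H) : Phi H T = cT T := rfl

@[simp] lemma Phi_mk (T : H →L[ℂ] H) (f : Linf H) : Phi H T (mkK f) = mkK (compT T f) := rfl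

/-- constant sequences -/
noncomputable def const (v : H) : Linf H :=
  ⟨fun _ => v, memℓp_infty ⟨‖v‖, by rintro r ⟨k, rfl⟩; simp⟩⟩

@[simp] lemma const_apply (v : H) (k : ℕ) : (const v) k = v := rfl

lemma norm_mkK_const (v : H) : ‖mkK (const v)‖ = ‖v‖ := by
  rw [norm_mkK]
  exact L_eq (by simpa using (tendsto_const_nhds : Tendsto (fun _ : ℕ => ‖v‖) U (𝓝 ‖v‖)))

lemma Phi_isometry (T : H →L[ℂ] H) : ‖Phi H T‖ = ‖T‖ := by
  refine le_antisymm ?_ ?_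
  · refine ContinuousLinearMap.opNorm_le_bound _ (norm_nonneg T) fun a => ?_
    exact qT_bound T a
  · refine T.opNorm_le_bound (norm_nonneg (Phi H T)) fun v => ?_
    have h1 : compT T (const v) = const (T v) := by
      ext k; simp
    calc ‖T v‖ = ‖mkK (const (T v))‖ := (norm_mkK_const _).symm
      _ = ‖Phi H T (mkK (const v))‖ := by rw [Phi_mk, h1]
      _ ≤ ‖Phi H T‖ * ‖mkK (const v)‖ := (Phi H T).le_opNorm _
      _ = ‖Phi H T‖ * ‖v‖ := by rw [norm_mkK_const]


lemma sub_smul_apply_mk (S : H →L[ℂ] H) (zc : ℂ) (X : Linf H) :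
    (Phi H S - zc • 1) (mkK X) = mkK (compT S X - zc • X) := by
  rw [ContinuousLinearMap.sub_apply, ContinuousLinearMap.smul_apply,
    ContinuousLinearMap.one_apply, Phi_mk]
  rfl

lemma coe_sub_smul (S : H →L[ℂ] H) (zc : ℂ) (X : Linf H) (k : ℕ) :
    (compT S X - zc • X) k = S (X k) - zc • X k := by
  have h1 : (compT S X - zc • X) k = (compT S X) k - (zc • X) k := by
    rw [lp.coeFn_sub]; rfl
  have h2 : (zc • X) k = zc • X k := by rw [lp.coeFn_smul]; rfl
  rw [h1, h2, compT_apply]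

lemma sub_smul_apply_H (S : H →L[ℂ] H) (zc : ℂ) (v : H) :
    (S - zc • 1) v = S v - zc • v := by
  rw [ContinuousLinearMap.sub_apply, ContinuousLinearMap.smul_apply,
    ContinuousLinearMap.one_apply]

lemma main_iff (n : ℕ) (T : Fin n → H →L[ℂ] H) (z : Fin n → ℂ) :
    ((∃ x : ℕ → H, (∀ k, ‖x k‖ = 1) ∧
        ∀ j, Tendsto (fun k => ‖(T j - (z j) • 1) (x k)‖) atTop (𝓝 0)) ↔
      (∃ y : K H, y ≠ 0 ∧ ∀ j, (Phi H (T j) - (z j) • 1) y = 0)) := by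
  constructor
  · rintro ⟨x, hx1, hx2⟩
    have hmem : Memℓp x ∞ := memℓp_infty ⟨1, by rintro r ⟨k, rfl⟩; simp [hx1 k]⟩
    set X : Linf H := ⟨x, hmem⟩ with hX
    refine ⟨mkK X, ?_, ?_⟩
    · have hnorm : ‖mkK X‖ = 1 := by
        rw [norm_mkK]
        refine L_eq ?_
        have : (fun k => ‖X k‖) = fun _ => 1 := by funext k; exact hx1 k
        rw [this]
        exact tendsto_const_nhds
      intro h
      rw [h, norm_zero] at hnorm
      norm_num at hnorm
    · intro j
      rw [sub_smul_apply_mk]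
      refine (Submodule.Quotient.mk_eq_zero _).2 ?_
      rw [mem_N_iff']
      have ht : Tendsto (fun k => ‖(T j - (z j) • 1) (x k)‖) U (𝓝 0) :=
        (hx2 j).mono_left U_le
      refine ht.congr fun k => ?_
      rw [coe_sub_smul, sub_smul_apply_H]
  · rintro ⟨y, hy, hzero⟩
    obtain ⟨X, rfl⟩ := mkK_surjective y
    set c : ℝ := ‖mkK X‖ with hc
    have hcpos : 0 < c := norm_pos_iff.2 hy
    have hLX : Tendsto (fun k => ‖X k‖) U (𝓝 c) := tendsto_norm_mk X
    have hS : ∀ j, Tendsto (fun k => ‖(T j - (z j) • 1) (X k)‖) U (𝓝 0) := by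
      intro j
      have h0 := hzero j
      rw [sub_smul_apply_mk, Submodule.Quotient.mk_eq_zero, mem_N_iff'] at h0
      refine h0.congr fun k => ?_
      rw [coe_sub_smul, sub_smul_apply_H]
    have hsel : ∀ m : ℕ, ∃ k : ℕ, c/2 < ‖X k‖ ∧
        ∀ j, ‖(T j - (z j) • 1) (X k)‖ < 1/(m+1) := by
      intro m
      have h1 : ∀ᶠ k in (U : Filter ℕ), c/2 < ‖X k‖ :=
        hLX.eventually_const_lt (by linarith)
      have h2 : ∀ᶠ k in (U : Filter ℕ), ∀ j, ‖(T j - (z j) • 1) (X k)‖ < 1/(m+1) := by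
        rw [eventually_all]
        intro j
        exact (hS j).eventually_lt_const (by positivity)
      exact (h1.and h2).exists
    choose km hkm1 hkm2 using hsel
    set x : ℕ → H := fun m => ((‖X (km m)‖ : ℂ))⁻¹ • X (km m) with hxdef
    have hXkm_pos : ∀ m, 0 < ‖X (km m)‖ := fun m => lt_trans (by linarith) (hkm1 m)
    refine ⟨x, ?_, ?_⟩
    · intro m
      rw [hxdef]
      simp only [norm_smul, norm_inv, Complex.norm_real, Real.norm_eq_abs,
        abs_of_pos (hXkm_pos m)]
      field_simp
      exact div_self (ne_of_gt (hXkm_pos m))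
    · intro j
      have hb : ∀ m : ℕ, ‖(T j - (z j) • 1) (x m)‖ ≤ (c/2)⁻¹ * (1/(m+1)) := by
        intro m
        have hmap : (T j - (z j) • 1) (x m)
            = ((‖X (km m)‖ : ℂ))⁻¹ • ((T j - (z j) • 1) (X (km m))) := by
          rw [hxdef]
          exact map_smul _ _ _
        rw [hmap, norm_smul, norm_inv, Complex.norm_real, Real.norm_eq_abs,
          abs_of_pos (hXkm_pos m)]
        have h1 : ‖X (km m)‖⁻¹ ≤ (c/2)⁻¹ := by
          apply inv_anti₀ (by linarith) (le_of_lt (hkm1 m))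
        have h2 : ‖(T j - (z j) • 1) (X (km m))‖ ≤ 1/(m+1) := le_of_lt ((hkm2 m) j)
        exact mul_le_mul h1 h2 (norm_nonneg _) (by positivity)
      have hbt : Tendsto (fun m : ℕ => (c/2)⁻¹ * (1/(m+1) : ℝ)) atTop (𝓝 0) := by
        have := tendsto_one_div_add_atTop_nhds_zero_nat.const_mul ((c/2)⁻¹)
        simpa using this
      exact squeeze_zero (fun m => norm_nonneg _) hb hbt

end Berb


theorem stmt16 {H : Type u} [NormedAddCommGroup H] [InnerProductSpace ℂ H] [CompleteSpace H] :
    ∃ (K : Type u) (_ : NormedAddCommGroup K) (_ : InnerProductSpace ℂ K) (_ : CompleteSpace K)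
      (Φ : (H →L[ℂ] H) →⋆ₐ[ℂ] (K →L[ℂ] K)),
      (∀ T : H →L[ℂ] H, ‖Φ T‖ = ‖T‖) ∧
      ∀ (n : ℕ) (T : Fin n → H →L[ℂ] H) (z : Fin n → ℂ),
        ((∃ x : ℕ → H, (∀ k, ‖x k‖ = 1) ∧
            ∀ j, Tendsto (fun k => ‖(T j - (z j) • 1) (x k)‖) atTop (𝓝 0)) ↔
          (∃ y : K, y ≠ 0 ∧ ∀ j, (Φ (T j) - (z j) • 1) y = 0)) := by
  exact ⟨Berb.K H, inferInstance, inferInstance, inferInstance, Berb.Phi H,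
    fun T => Berb.Phi_isometry T, fun n T z => Berb.main_iff n T z⟩
end
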